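/- Let β : ℤ → ℂ be finitely supported, let h, g : (0,∞) → ℝ be measurable with ∫₀^∞ |h(ρ) g(ρ)| ρ dρ < ∞, and let k ∈ ℝ² \ {0}. Consider the divergence free wavelet ψ̂(ξ) = −i (Σ_n β_n e^{i n θ_ξ}) h(|ξ|) e_θ(ξ) and the divergence free scaling function translate φ̂_k(ξ) = −i g(|ξ|) e^{−i⟨ξ,k⟩} e_θ(ξ), with e_θ(ξ) = (ξ₂, −ξ₁)/|ξ|. Then the filter tap has the closed form ⟨ψ̂, φ̂_k⟩_{L²(ℝ²,ℂ²)} = 2π Σ_n i^n β_n e^{i n θ_k} ∫₀^∞ h(ρ) g(ρ) J_n(ρ|k|) ρ dρ, where θ_k is the polar angle of k and J_n(z) = (1/2π) ∫₀^{2π} e^{i(z sin φ − n φ)} dφ. -/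

import Mathlib

/-!
Since `e_θ(ξ)` is a unit vector, the integrand collapses to
`(∑ β_n e^{inθ_ξ}) h(|ξ|) g(|ξ|) e^{i⟨ξ,k⟩}`. In polar coordinates `⟨ξ, k⟩ = ρ|k| cos(θ - θ_k)`,
and for each `n` Fubini separates the radial from the angular integral; the substitution
`θ = θ_k + π/2 - φ` turns the angular integral into `2π iⁿ e^{inθ_k} J_n(ρ|k|)`.
-/

open MeasureTheory RealInnerProductSpace

/-- The Bessel function of the first kind of integer order `n`. -/
noncomputable def besselJ (n : ℤ) (z : ℝ) : ℂ :=
  (2 * Real.pi)⁻¹ • ∫ φ in (0 : ℝ)..(2 * Real.pi),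
    Complex.exp (Complex.I * ((z * Real.sin φ - n * φ : ℝ) : ℂ))

/-- The angular unit vector `e_θ(ξ) = (ξ₂, -ξ₁)/|ξ|`, viewed as a complex vector. -/
noncomputable def eThetaC (ξ : EuclideanSpace ℝ (Fin 2)) : Fin 2 → ℂ :=
  ![((ξ 1 / ‖ξ‖ : ℝ) : ℂ), ((-ξ 0 / ‖ξ‖ : ℝ) : ℂ)]

/-- The polar angle of a point in the plane. -/
noncomputable def polarAngle (v : EuclideanSpace ℝ (Fin 2)) : ℝ :=
  Complex.arg ((v 0 : ℂ) + (v 1 : ℂ) * Complex.I)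

open Complex Set ComplexConjugate
open scoped Real

theorem sum_smul_eThetaC_mul_conj {ξ : EuclideanSpace ℝ (Fin 2)} (hξ : ξ ≠ 0) (a b : ℂ) :
    ∑ c : Fin 2, (a • eThetaC ξ) c * conj ((b • eThetaC ξ) c) = a * conj b := by
  have hsq : ξ 0 ^ 2 + ξ 1 ^ 2 = ‖ξ‖ ^ 2 := by
    simp [EuclideanSpace.norm_eq, Fin.sum_univ_two, Real.sq_sqrt, add_nonneg, sq_nonneg]
  have hunit : ((ξ 1 / ‖ξ‖ : ℝ) : ℂ) ^ 2 + ((-ξ 0 / ‖ξ‖ : ℝ) : ℂ) ^ 2 = 1 := by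
    norm_cast
    field_simp
    linear_combination hsq
  simp only [Fin.sum_univ_two, eThetaC, Pi.smul_apply, smul_eq_mul, Matrix.cons_val_zero,
    Matrix.cons_val_one, map_mul, conj_ofReal]
  linear_combination (a * conj b) * hunit

theorem mul_conj_neg_I_mul_exp_neg (u v : ℂ) (x : ℝ) :
    -I * u * conj (-I * v * exp (-(I * x))) = u * conj v * exp (I * x) := by
  simp only [map_mul, map_neg, conj_I, conj_ofReal, ← exp_conj, neg_mul, neg_neg]
  linear_combination (-u * conj v * exp (I * x)) * I_mul_I

theorem polarAngle_eq_arg (v : EuclideanSpace ℝ (Fin 2)) :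
    polarAngle v = arg (orthonormalBasisOneI.repr.symm v) := rfl

theorem integral_euclideanSpace_fin_two_eq_polar {E : Type*} [NormedAddCommGroup E]
    [NormedSpace ℝ E] (f : EuclideanSpace ℝ (Fin 2) → E) :
    ∫ ξ, f ξ = ∫ p in polarCoord.target,
      p.1 • f (orthonormalBasisOneI.repr (Complex.polarCoord.symm p)) := by
  rw [Complex.integral_comp_polarCoord_symm (fun z => f (orthonormalBasisOneI.repr z)),
    (orthonormalBasisOneI.repr.measurePreserving).integral_comp
      orthonormalBasisOneI.repr.toHomeomorph.measurableEmbedding]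

theorem norm_repr_polarCoord_symm {p : ℝ × ℝ} (hp : p ∈ polarCoord.target) :
    ‖orthonormalBasisOneI.repr (Complex.polarCoord.symm p)‖ = p.1 := by
  rw [LinearIsometryEquiv.norm_map, Complex.norm_polarCoord_symm, abs_of_pos hp.1]

theorem polarAngle_repr_polarCoord_symm {p : ℝ × ℝ} (hp : p ∈ polarCoord.target) :
    polarAngle (orthonormalBasisOneI.repr (Complex.polarCoord.symm p)) = p.2 := by
  rw [polarAngle_eq_arg, LinearIsometryEquiv.symm_apply_apply]
  simpa [Complex.polarCoord_apply] using congrArg Prod.snd (Complex.polarCoord.right_inv hp)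

theorem inner_repr_polarCoord_symm (p : ℝ × ℝ) (k : EuclideanSpace ℝ (Fin 2)) :
    ⟪orthonormalBasisOneI.repr (Complex.polarCoord.symm p), k⟫
      = p.1 * ‖k‖ * Real.cos (p.2 - polarAngle k) := by
  rw [LinearIsometryEquiv.inner_map_eq_flip, polarAngle_eq_arg,
    ← orthonormalBasisOneI.repr.symm.norm_map k]
  generalize orthonormalBasisOneI.repr.symm k = w
  simp [Complex.inner, Real.cos_sub, mul_re, mul_im, cos_ofReal_re, sin_ofReal_re]
  rw [← norm_mul_cos_arg w, ← norm_mul_sin_arg w]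
  ring

theorem integral_exp_int_mul_mul_exp_cos_sub (n : ℤ) (z a : ℝ) :
    ∫ θ in Ioo (-π) π, exp (I * n * θ) * exp (I * (z * Real.cos (θ - a) : ℝ))
      = 2 * π * I ^ n * exp (I * n * a) * besselJ n z := by
  set F : ℝ → ℂ := fun θ => exp (I * n * θ) * exp (I * (z * Real.cos (θ - a) : ℝ))
  have hF : Function.Periodic F (2 * π) := by
    intro θ
    simp only [F, show θ + 2 * π - a = θ - a + 2 * π by ring, Real.cos_add_two_pi]
    rw [show I * n * ((θ + 2 * π : ℝ) : ℂ) = I * n * θ + n * (2 * π * I) by push_cast; ring,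
      exp_add, exp_int_mul_two_pi_mul_I, mul_one]
  have hsubst : ∀ φ, F (a + π / 2 - φ)
      = I ^ n * exp (I * n * a) * exp (I * (z * Real.sin φ - n * φ : ℝ)) := by
    intro φ
    rw [show I ^ n = exp (n * (π / 2 * I)) by rw [exp_int_mul, exp_pi_div_two_mul_I],
      ← exp_add, ← exp_add]
    simp only [F, show a + π / 2 - φ - a = π / 2 - φ by ring, Real.cos_pi_div_two_sub,
      ← exp_add]
    congr 1
    push_cast
    ring
  calc ∫ θ in Ioo (-π) π, F θ
      = ∫ θ in (-π)..(-π + 2 * π), F θ := by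
        rw [show -π + 2 * π = π by ring,
          intervalIntegral.integral_of_le (by linarith [Real.pi_pos]), integral_Ioc_eq_integral_Ioo]
    _ = ∫ θ in (a + π / 2 - 2 * π)..(a + π / 2 - 2 * π + 2 * π), F θ :=
        hF.intervalIntegral_add_eq _ _
    _ = ∫ φ in (0 : ℝ)..(2 * π), F (a + π / 2 - φ) := by
        rw [intervalIntegral.integral_comp_sub_left F (a + π / 2)]
        ring_nf
    _ = 2 * π * I ^ n * exp (I * n * a) * besselJ n z := by
        simp only [hsubst, intervalIntegral.integral_const_mul, besselJ, real_smul]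
        push_cast
        field_simp [ofReal_ne_zero.2 Real.pi_ne_zero]

theorem integrableOn_polarCoord_target_exp_cos (f : ℝ → ℂ)
    (hf : IntegrableOn (fun ρ => f ρ * ρ) (Ioi 0)) (n : ℤ) (z a : ℝ) :
    IntegrableOn (fun p : ℝ × ℝ => f p.1 * p.1 *
        (exp (I * n * p.2) * exp (I * (p.1 * z * Real.cos (p.2 - a) : ℝ))))
      polarCoord.target := by
  rw [polarCoord_target, IntegrableOn, Measure.volume_eq_prod, ← Measure.prod_restrict]
  have hbound : Integrable (fun p : ℝ × ℝ => ‖f p.1 * p.1‖ * 1)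
      ((volume.restrict (Ioi 0)).prod (volume.restrict (Ioo (-π) π))) :=
    hf.norm.mul_prod (integrableOn_const measure_Ioo_lt_top.ne)
  refine hbound.mono' ?_ (ae_of_all _ fun p => ?_)
  · exact hf.aestronglyMeasurable.comp_fst.mul (by fun_prop)
  · have hn : ‖exp (I * n * p.2)‖ = 1 := by
      rw [mul_assoc, ← ofReal_intCast, ← ofReal_mul, norm_exp_I_mul_ofReal]
    simp only [norm_mul, hn, norm_exp_I_mul_ofReal, mul_one, le_refl]

theorem integral_polarCoord_target_exp_cos_eq_besselJ (f : ℝ → ℂ)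
    (hf : IntegrableOn (fun ρ => f ρ * ρ) (Ioi 0)) (n : ℤ) (z a : ℝ) :
    ∫ p in polarCoord.target, f p.1 * p.1 *
        (exp (I * n * p.2) * exp (I * (p.1 * z * Real.cos (p.2 - a) : ℝ)))
      = 2 * π * I ^ n * exp (I * n * a) * ∫ ρ in Ioi 0, f ρ * besselJ n (ρ * z) * ρ := by
  have hint := integrableOn_polarCoord_target_exp_cos f hf n z a
  rw [polarCoord_target, IntegrableOn, Measure.volume_eq_prod] at hint
  rw [polarCoord_target, Measure.volume_eq_prod, setIntegral_prod _ hint,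
    ← integral_const_mul]
  refine setIntegral_congr_fun measurableSet_Ioi fun ρ _ => ?_
  simp only [integral_const_mul, integral_exp_int_mul_mul_exp_cos_sub]
  ring

theorem stmt_14_general (β : ℤ →₀ ℂ) (h g : ℝ → ℝ)
    (hmeas : Measurable h) (gmeas : Measurable g)
    (hint : IntegrableOn (fun ρ : ℝ => |h ρ * g ρ| * ρ) (Set.Ioi (0 : ℝ)))
    (k : EuclideanSpace ℝ (Fin 2)) :
    (∫ ξ : EuclideanSpace ℝ (Fin 2), ∑ c : Fin 2,
        (((-Complex.I) *
            (∑ n ∈ β.support, β n * Complex.exp (Complex.I * (n : ℂ) * ((polarAngle ξ : ℝ) : ℂ))) *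
            ((h ‖ξ‖ : ℝ) : ℂ)) • eThetaC ξ) c *
          (starRingEnd ℂ)
            ((((-Complex.I) * ((g ‖ξ‖ : ℝ) : ℂ) *
                Complex.exp (-(Complex.I * ((⟪ξ, k⟫ : ℝ) : ℂ)))) • eThetaC ξ) c))
      = (2 * Real.pi : ℂ) * ∑ n ∈ β.support,
          Complex.I ^ (n : ℤ) * β n *
            Complex.exp (Complex.I * (n : ℂ) * ((polarAngle k : ℝ) : ℂ)) *
            ∫ ρ in Set.Ioi (0 : ℝ),
              ((h ρ * g ρ : ℝ) : ℂ) * besselJ n (ρ * ‖k‖) * (ρ : ℂ) := by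
  set f : ℝ → ℂ := fun ρ => ((h ρ * g ρ : ℝ) : ℂ)
  have hf : IntegrableOn (fun ρ => f ρ * ρ) (Ioi 0) := by
    refine hint.mono' (by fun_prop) ((ae_restrict_mem measurableSet_Ioi).mono fun ρ hρ => ?_)
    simp [f, abs_of_pos (mem_Ioi.1 hρ)]
  calc _ = ∫ p in polarCoord.target, ∑ n ∈ β.support, β n * (f p.1 * p.1 * (exp (I * n * p.2) *
          exp (I * (p.1 * ‖k‖ * Real.cos (p.2 - polarAngle k) : ℝ)))) := by
        rw [integral_euclideanSpace_fin_two_eq_polar]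
        refine setIntegral_congr_fun polarCoord.open_target.measurableSet fun p hp => ?_
        have hξ := norm_repr_polarCoord_symm hp
        rw [sum_smul_eThetaC_mul_conj (norm_ne_zero_iff.1 (hξ ▸ hp.1.ne')), hξ,
          polarAngle_repr_polarCoord_symm hp, inner_repr_polarCoord_symm, mul_assoc (-I),
          mul_conj_neg_I_mul_exp_neg]
        simp only [Finset.sum_mul, Finset.smul_sum]
        refine Finset.sum_congr rfl fun n _ => ?_
        simp only [f, real_smul, conj_ofReal, ofReal_mul]
        ring
    _ = _ := by
      rw [integral_finsetSum _ fun n _ =>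
        (integrableOn_polarCoord_target_exp_cos f hf n _ _).const_mul _, Finset.mul_sum]
      refine Finset.sum_congr rfl fun n _ => ?_
      rw [integral_const_mul, integral_polarCoord_target_exp_cos_eq_besselJ f hf]
      ring

/-- Closed form of the filter taps: the `L²` inner product of the divergence free wavelet
`ψ̂(ξ) = -i (∑_n β_n e^{inθ_ξ}) h(|ξ|) e_θ(ξ)` with the divergence free scaling function
translate `φ̂_k(ξ) = -i g(|ξ|) e^{-i⟨ξ,k⟩} e_θ(ξ)` equals
`2π ∑_n i^n β_n e^{inθ_k} ∫₀^∞ h(ρ) g(ρ) J_n(ρ|k|) ρ dρ`. -/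
theorem stmt_14 (β : ℤ →₀ ℂ) (h g : ℝ → ℝ)
    (hmeas : Measurable h) (gmeas : Measurable g)
    (hint : IntegrableOn (fun ρ : ℝ => |h ρ * g ρ| * ρ) (Set.Ioi (0 : ℝ)))
    (k : EuclideanSpace ℝ (Fin 2)) (hk : k ≠ 0) :
    (∫ ξ : EuclideanSpace ℝ (Fin 2), ∑ c : Fin 2,
        (((-Complex.I) *
            (∑ n ∈ β.support, β n * Complex.exp (Complex.I * (n : ℂ) * ((polarAngle ξ : ℝ) : ℂ))) *
            ((h ‖ξ‖ : ℝ) : ℂ)) • eThetaC ξ) c *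
          (starRingEnd ℂ)
            ((((-Complex.I) * ((g ‖ξ‖ : ℝ) : ℂ) *
                Complex.exp (-(Complex.I * ((⟪ξ, k⟫ : ℝ) : ℂ)))) • eThetaC ξ) c))
      = (2 * Real.pi : ℂ) * ∑ n ∈ β.support,
          Complex.I ^ (n : ℤ) * β n *
            Complex.exp (Complex.I * (n : ℂ) * ((polarAngle k : ℝ) : ℂ)) *
            ∫ ρ in Set.Ioi (0 : ℝ),
              ((h ρ * g ρ : ℝ) : ℂ) * besselJ n (ρ * ‖k‖) * (ρ : ℂ) :=
  stmt_14_general β h g hmeas gmeas hint k
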